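/- arXiv:2603.29477 — 3 statements merged into one kernel-verified Lean document; each statement's English description precedes it below -/
import Mathlib

section
/- Consider paths P_m on vertex set {1,...,m} with edges {i, i+1}, with vertex labels ℓ : {1,...,m} → ℕ. Fix r ≥ 1 and n > 2r. Define G₁ as the path on n vertices with labels ℓ₁(1) = n+1 and ℓ₁(i) = n+2 for i ≥ 2; define G₂ as the path on n+1 vertices with all labels equal to n+2; define G₃ as the path on n+1 vertices with ℓ₃(1) = n+1 and ℓ₃(i) = n+2 for i ≥ 2. Then: for every vertex v of G₃ with v ≤ r+1, the radius-r neighborhood of v in G₃ (with labels, and with IDs equal to vertex indices) is equal to the radius-r neighborhood of v in G₁; and for every vertex v of G₃ with v ≥ r+2, the radius-r neighborhood of v in G₃ equals the radius-r neighborhood of v in G₂. -/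
/-- The radius-`r` neighborhood of vertex `v` in the labeled path on vertices
`{1, …, m}` (with edges `{i, i+1}`, labels `ℓ`, and identifiers equal to vertex
indices): for each vertex `u`, if `u` lies in the path and at distance at most `r`
from `v`, its label and identifier; otherwise nothing. -/
def pathWindow (m : ℕ) (ℓ : ℕ → ℕ) (r v : ℕ) : ℕ → Option (ℕ × ℕ) :=
  fun u => if 1 ≤ u ∧ u ≤ m ∧ u ≤ v + r ∧ v ≤ u + r then some (ℓ u, u) else none

/-- Fix `r ≥ 1` and `n > 2r`.  Let `G₁` be the `n`-vertex path with
labels `ℓ₁(1) = n+1`, `ℓ₁(i) = n+2` for `i ≥ 2`; `G₂` the `(n+1)`-vertex path with all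
labels `n+2`; `G₃` the `(n+1)`-vertex path with `ℓ₃(1) = n+1`, `ℓ₃(i) = n+2` for
`i ≥ 2`.  Then every vertex `v ≤ r+1` of `G₃` has the same radius-`r` labeled
identified neighborhood in `G₃` as in `G₁`, and every vertex `v ≥ r+2` of `G₃` has
the same radius-`r` neighborhood in `G₃` as in `G₂`. -/
theorem agtg_indistinguishability (r n : ℕ) (hr : 1 ≤ r) (hn : 2 * r < n)
    (ℓ₁ ℓ₂ ℓ₃ : ℕ → ℕ)
    (hℓ₁ : ∀ i, ℓ₁ i = if i = 1 then n + 1 else n + 2)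
    (hℓ₂ : ∀ i, ℓ₂ i = n + 2)
    (hℓ₃ : ∀ i, ℓ₃ i = if i = 1 then n + 1 else n + 2) :
    (∀ v, 1 ≤ v → v ≤ r + 1 →
      pathWindow (n + 1) ℓ₃ r v = pathWindow n ℓ₁ r v) ∧
    (∀ v, r + 2 ≤ v → v ≤ n + 1 →
      pathWindow (n + 1) ℓ₃ r v = pathWindow (n + 1) ℓ₂ r v) := by
  constructor
  · intro v hv1 hv2
    funext u
    simp only [pathWindow, hℓ₁, hℓ₃]
    split_ifs with h1 h2 h2 <;> first | rfl | omega
  · intro v hv1 hv2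
    funext u
    simp only [pathWindow, hℓ₂, hℓ₃]
    split_ifs with h1 h2 <;> first | rfl | omega
end

section
/- There is no local decision algorithm with universal unbounded certificates deciding AGTG. Formally: for every r ≥ 1 and every function A from (radius-r labeled, certified, identified neighborhoods) to Bool, the following cannot both hold for all labeled paths (P_n, x) with consecutive identifiers: (a) if x(i) > n for all i then A accepts at every node for every certificate assignment; (b) if x(i) ≤ n for some i, then there exists a certificate assignment making some node reject. -/
/-- The radius-`r` certified view of vertex `v` in the labeled path on `{1, …, m}`
(edges `{i, i+1}`): labels, certificates (bit strings) and identifiers (equal to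
vertex indices) of the vertices at distance at most `r` from `v`. -/
def certWindow (m : ℕ) (ℓ : ℕ → ℕ) (c : ℕ → List Bool) (r v : ℕ) :
    ℕ → Option (ℕ × List Bool × ℕ) :=
  fun u => if 1 ≤ u ∧ u ≤ m ∧ u ≤ v + r ∧ v ≤ u + r then some (ℓ u, c u, u) else none

/-- There is no local decision algorithm with universal unbounded
certificates deciding `AGTG` (the language of `n`-node paths all of whose labels
exceed `n`): for every radius `r ≥ 1` and every map `A` from radius-`r` labeled,
certified, identified neighborhoods to `Bool`, it cannot simultaneously hold that
(a) on every path in `AGTG`, `A` accepts at every node for every certificate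
assignment, and (b) on every path not in `AGTG`, some certificate assignment makes
some node reject. -/
theorem agtg_not_in_pi_one_local (r : ℕ) (hr : 1 ≤ r)
    (A : (ℕ → Option (ℕ × List Bool × ℕ)) → Bool) :
    ¬ ((∀ (n : ℕ) (ℓ : ℕ → ℕ), (∀ i, 1 ≤ i → i ≤ n → n < ℓ i) →
          ∀ (c : ℕ → List Bool) (v : ℕ), 1 ≤ v → v ≤ n →
            A (certWindow n ℓ c r v) = true) ∧
       (∀ (n : ℕ) (ℓ : ℕ → ℕ), (∃ i, 1 ≤ i ∧ i ≤ n ∧ ℓ i ≤ n) →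
          ∃ (c : ℕ → List Bool) (v : ℕ), 1 ≤ v ∧ v ≤ n ∧
            A (certWindow n ℓ c r v) = false)) := by
  rintro ⟨ha, hb⟩
  set n : ℕ := 2 * r + 1 with hn
  -- labels of G₃ (also of G₁): 1 ↦ n+1, others ↦ n+2
  set ℓ3 : ℕ → ℕ := fun i => if i = 1 then n + 1 else n + 2 with hℓ3
  -- G₃ has n+1 nodes and node 1 has label n+1 ≤ n+1, so it's rejected
  obtain ⟨c, v, hv1, hv2, hrej⟩ := hb (n + 1) ℓ3 ⟨1, le_refl 1, by omega, by simp [hℓ3]⟩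
  by_cases hcase : v ≤ r + 1
  · -- same window as in G₁ (n nodes, same labels), which is accepted
    have hacc := ha n ℓ3 (by intro i hi1 hi2; simp only [hℓ3]; split <;> omega) c v hv1
      (by omega)
    have heq : certWindow n ℓ3 c r v = certWindow (n + 1) ℓ3 c r v := by
      funext u
      unfold certWindow
      by_cases h : 1 ≤ u ∧ u ≤ n ∧ u ≤ v + r ∧ v ≤ u + r
      · rw [if_pos h, if_pos ⟨h.1, by omega, h.2.2⟩]
      · rw [if_neg h, if_neg (by omega)]
    rw [heq] at hacc
    rw [hacc] at hrej
    simp at hrej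
  · -- same window as in G₂ (n+1 nodes, all labels n+2), which is accepted
    have hacc := ha (n + 1) (fun _ => n + 2) (by intro i _ _; show n + 1 < n + 2; omega) c v hv1 hv2
    have heq : certWindow (n + 1) (fun _ => n + 2) c r v
        = certWindow (n + 1) ℓ3 c r v := by
      funext u
      unfold certWindow
      by_cases h : 1 ≤ u ∧ u ≤ n + 1 ∧ u ≤ v + r ∧ v ≤ u + r
      · rw [if_pos h, if_pos h]
        have hu2 : u ≠ 1 := by omega
        simp [hℓ3, hu2]
      · rw [if_neg h, if_neg h]
    rw [heq] at hacc
    rw [hacc] at hrej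
    simp at hrej
end

section
/- Define ALTG as the set of labeled paths (P_n, x) with x(i) < n for all i. For every r ≥ 1, every monotone-eventually certificate bound Q : ℕ → ℕ, and every local verifier A of radius r, the following cannot both hold: (a) for every (P_n, x) ∈ ALTG and every certificate assignment c with |c(v)| ≤ Q(n), A accepts at every node; (b) for every (P_n, x) ∉ ALTG there is a certificate assignment c with |c(v)| ≤ Q(n) making some node reject. Concretely, choosing n > 2r with Q(n+1) ≥ Q(n), the instances G₁ = (n+1 nodes; labels n, n−1, ..., n−1), G₂ = (n nodes; all labels n−1), G₃ = (n nodes; labels n, n−1, ..., n−1) give a contradiction: G₁, G₂ ∈ ALTG, G₃ ∉ ALTG, and every node of G₃ shares its radius-r view (for any certificate assignment bounded by Q(n) ≤ Q(n+1)) with a node of G₁ or G₂. -/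
/-- `ALTG` is the language of labeled `n`-node paths with all labels
`< n`.  For every radius `r ≥ 1`, every certificate bound `Q : ℕ → ℕ` (which, as any
function `ℕ → ℕ`, admits arbitrarily large `n` with `Q n ≤ Q (n+1)`), and every local
verifier `A` of radius `r`, it cannot simultaneously hold that (a) on every path in
`ALTG`, `A` accepts at every node for every certificate assignment bounded by `Q n`,
and (b) on every path not in `ALTG`, some certificate assignment bounded by `Q n`
makes some node reject. -/
theorem altg_not_in_pi_one_plocal (r : ℕ) (hr : 1 ≤ r) (Q : ℕ → ℕ)
    (hQ : ∀ m, ∃ n, m < n ∧ Q n ≤ Q (n + 1))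
    (A : (ℕ → Option (ℕ × List Bool × ℕ)) → Bool) :
    ¬ ((∀ (n : ℕ) (ℓ : ℕ → ℕ), (∀ i, 1 ≤ i → i ≤ n → ℓ i < n) →
          ∀ c : ℕ → List Bool, (∀ v, 1 ≤ v → v ≤ n → (c v).length ≤ Q n) →
            ∀ v, 1 ≤ v → v ≤ n → A (certWindow n ℓ c r v) = true) ∧
       (∀ (n : ℕ) (ℓ : ℕ → ℕ), (∃ i, 1 ≤ i ∧ i ≤ n ∧ n ≤ ℓ i) →
          ∃ c : ℕ → List Bool, (∀ v, 1 ≤ v → v ≤ n → (c v).length ≤ Q n) ∧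
            ∃ v, 1 ≤ v ∧ v ≤ n ∧ A (certWindow n ℓ c r v) = false)) := by
  rintro ⟨ha, hb⟩
  obtain ⟨n, hn, hQn⟩ := hQ (2 * r)
  -- G₃ : n nodes, labels n, n-1, …, n-1 ; not in ALTG
  set ℓ₃ : ℕ → ℕ := fun i => if i = 1 then n else n - 1 with hℓ₃
  obtain ⟨c, hc, v, hv1, hvn, hrej⟩ :=
    hb n ℓ₃ ⟨1, le_refl 1, by omega, by simp [hℓ₃]⟩
  -- truncate certificates outside {1,…,n}
  set c' : ℕ → List Bool := fun w => if w ≤ n then c w else [] with hc'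
  have hwin0 : certWindow n ℓ₃ c r v = certWindow n ℓ₃ c' r v := by
    funext u
    simp only [certWindow]
    split
    · next h => simp only [hc', if_pos h.2.1]
    · rfl
  rw [hwin0] at hrej
  by_cases hcase : v + r ≤ n
  · -- window of v in G₃ equals window of v in G₁ (n+1 nodes)
    have hwin : certWindow n ℓ₃ c' r v = certWindow (n + 1) ℓ₃ c' r v := by
      funext u
      simp only [certWindow]
      have hiff : (1 ≤ u ∧ u ≤ n ∧ u ≤ v + r ∧ v ≤ u + r) ↔
          (1 ≤ u ∧ u ≤ n + 1 ∧ u ≤ v + r ∧ v ≤ u + r) := by omega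
      rw [if_congr hiff rfl rfl]
    have hacc := ha (n + 1) ℓ₃
      (by intro i _ _; simp only [hℓ₃]; split <;> omega)
      c'
      (by
        intro w h1 h2
        simp only [hc']
        split
        · exact le_trans (hc w h1 (by omega)) hQn
        · simp)
      v hv1 (by omega)
    rw [← hwin] at hacc
    rw [hrej] at hacc
    exact Bool.false_ne_true hacc
  · -- window of v in G₃ equals window of v in G₂ (n nodes, all labels n-1)
    have hwin : certWindow n ℓ₃ c' r v = certWindow n (fun _ => n - 1) c' r v := by
      funext u
      simp only [certWindow]
      split
      · next h =>
          have hu : u ≠ 1 := by omega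
          simp [hℓ₃, hu]
      · rfl
    have hacc := ha n (fun _ => n - 1)
      (by intro i _ _; show n - 1 < n; omega)
      c'
      (by
        intro w h1 h2
        simp only [hc', if_pos h2]
        exact hc w h1 h2)
      v hv1 hvn
    rw [← hwin] at hacc
    rw [hrej] at hacc
    exact Bool.false_ne_true hacc
end
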